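/- Let minmod be as above and define the reconstructed east/west values ρ_i^E = ρ̄_i + (Δx/2)·σ_i and ρ_i^W = ρ̄_i - (Δx/2)·σ_i, where σ_i = minmod((ρ̄_i - ρ̄_{i-1})/Δx, (ρ̄_{i+1} - ρ̄_{i-1})/(2Δx), (ρ̄_{i+1} - ρ̄_i)/Δx). Then ρ_i^E and ρ_i^W both lie in the closed interval [min{ρ̄_{i-1}, ρ̄_i, ρ̄_{i+1}}, max{ρ̄_{i-1}, ρ̄_i, ρ̄_{i+1}}]. -/

import Mathlib

/-!
Write `σ = minmod a b c` with `a = (ρ̄ᵢ - ρ̄ᵢ₋₁)/Δx` and `c = (ρ̄ᵢ₊₁ - ρ̄ᵢ)/Δx`. The limited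
slope lies between `0` and `a` and between `0` and `c`, so moving from `ρ̄ᵢ` by half a cell with
slope `σ` stays between `ρ̄ᵢ` and `ρ̄ᵢ₊₁` going east, and between `ρ̄ᵢ` and `ρ̄ᵢ₋₁` going west.
-/

/-- The minmod slope limiter. -/
noncomputable def minmod (a b c : ℝ) : ℝ :=
  if 0 < a ∧ 0 < b ∧ 0 < c then min a (min b c)
  else if a < 0 ∧ b < 0 ∧ c < 0 then max a (max b c)
  else 0

open Set

theorem minmod_mem_uIcc_zero_left (a b c : ℝ) : minmod a b c ∈ uIcc 0 a := by
  unfold minmod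
  split_ifs with hpos hneg
  · exact mem_uIcc_of_le (lt_min hpos.1 (lt_min hpos.2.1 hpos.2.2)).le (min_le_left _ _)
  · exact mem_uIcc_of_ge (le_max_left _ _) (max_lt hneg.1 (max_lt hneg.2.1 hneg.2.2)).le
  · exact left_mem_uIcc

theorem minmod_mem_uIcc_zero_right (a b c : ℝ) : minmod a b c ∈ uIcc 0 c := by
  unfold minmod
  split_ifs with hpos hneg
  · exact mem_uIcc_of_le (lt_min hpos.1 (lt_min hpos.2.1 hpos.2.2)).le
      ((min_le_right _ _).trans (min_le_right _ _))
  · exact mem_uIcc_of_ge ((le_max_right _ _).trans (le_max_right _ _))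
      (max_lt hneg.1 (max_lt hneg.2.1 hneg.2.2)).le
  · exact left_mem_uIcc

theorem add_half_mul_mem_uIcc {h σ x y : ℝ} (hh : 0 < h) (hσ : σ ∈ uIcc 0 ((y - x) / h)) :
    x + h / 2 * σ ∈ uIcc x y := by
  rw [mem_uIcc] at hσ ⊢
  rcases hσ with ⟨hσ₀, hσy⟩ | ⟨hσy, hσ₀⟩
  · rw [le_div_iff₀ hh] at hσy
    left; constructor <;> nlinarith
  · rw [div_le_iff₀ hh] at hσy
    right; constructor <;> nlinarith

theorem sub_half_mul_mem_uIcc {h σ x y : ℝ} (hh : 0 < h) (hσ : σ ∈ uIcc 0 ((x - y) / h)) :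
    x - h / 2 * σ ∈ uIcc x y := by
  rw [sub_eq_add_neg, ← mul_neg]
  refine add_half_mul_mem_uIcc hh ?_
  have hnegσ := mem_image_of_mem Neg.neg hσ
  rwa [image_neg_uIcc, neg_zero, ← neg_div, neg_sub] at hnegσ

theorem minmod_reconstruction_local_max_principle
    (Δx : ℝ) (hΔx : 0 < Δx) (ρm ρi ρp : ℝ)
    (σ : ℝ) (hσ : σ = minmod ((ρi - ρm) / Δx) ((ρp - ρm) / (2 * Δx)) ((ρp - ρi) / Δx))
    (ρE ρW : ℝ) (hE : ρE = ρi + Δx / 2 * σ) (hW : ρW = ρi - Δx / 2 * σ) :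
    ρE ∈ Set.Icc (min ρm (min ρi ρp)) (max ρm (max ρi ρp)) ∧
    ρW ∈ Set.Icc (min ρm (min ρi ρp)) (max ρm (max ρi ρp)) := by
  subst hσ hE hW
  have hm : ρm ∈ Icc (min ρm (min ρi ρp)) (max ρm (max ρi ρp)) := by simp
  have hi : ρi ∈ Icc (min ρm (min ρi ρp)) (max ρm (max ρi ρp)) := by simp
  have hp : ρp ∈ Icc (min ρm (min ρi ρp)) (max ρm (max ρi ρp)) := by simp
  exact ⟨uIcc_subset_Icc hi hp (add_half_mul_mem_uIcc hΔx (minmod_mem_uIcc_zero_right _ _ _)),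
    uIcc_subset_Icc hi hm (sub_half_mul_mem_uIcc hΔx (minmod_mem_uIcc_zero_left _ _ _))⟩
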